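/- arXiv:1508.06889 — 3 statements merged into one kernel-verified Lean document; each statement's English description precedes it below -/
import Mathlib

section
/- Let G = (V,E) be a simple graph, let uv ∈ E be an edge of G, and let G_F be the gadget extension of G at uv. Then the independence number satisfies α(G_F) = α(G) + 1. -/
/-- A set of vertices is independent if no two of its vertices are adjacent. -/
def IsIndepSet {V : Type*} (G : SimpleGraph V) (s : Set V) : Prop :=
  s.Pairwise fun x y => ¬ G.Adj x y

/-- The independence number: the maximum size of an independent set. -/
noncomputable def indepNum {V : Type*} (G : SimpleGraph V) : ℕ :=
  sSup {n : ℕ | ∃ s : Set V, IsIndepSet G s ∧ s.ncard = n}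

/-- The gadget extension of `G` at the edge `uv`: add three new vertices
`a = Sum.inr 0`, `b = Sum.inr 1`, `c = Sum.inr 2` and the six new edges
`ab, bc, ca, au, bu, bv`. -/
def gadget {V : Type*} (G : SimpleGraph V) (u v : V) : SimpleGraph (V ⊕ Fin 3) :=
  SimpleGraph.fromEdgeSet
    ((Sym2.map Sum.inl '' G.edgeSet) ∪
      {s(Sum.inr 0, Sum.inr 1), s(Sum.inr 1, Sum.inr 2), s(Sum.inr 2, Sum.inr 0),
       s(Sum.inr 0, Sum.inl u), s(Sum.inr 1, Sum.inl u), s(Sum.inr 1, Sum.inl v)})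

lemma indep_bdd {V : Type*} [Fintype V] (G : SimpleGraph V) :
    BddAbove {n : ℕ | ∃ s : Set V, IsIndepSet G s ∧ s.ncard = n} := by
  refine ⟨Fintype.card V, ?_⟩
  rintro n ⟨s, -, rfl⟩
  calc s.ncard ≤ (Set.univ : Set V).ncard :=
        Set.ncard_le_ncard (Set.subset_univ s) Set.finite_univ
    _ = Fintype.card V := by simp [Set.ncard_univ]

lemma le_indepNum {V : Type*} [Fintype V] (G : SimpleGraph V) {s : Set V}
    (hs : IsIndepSet G s) : s.ncard ≤ indepNum G :=
  le_csSup (indep_bdd G) ⟨s, hs, rfl⟩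

lemma exists_indep {V : Type*} [Fintype V] (G : SimpleGraph V) :
    ∃ s : Set V, IsIndepSet G s ∧ s.ncard = indepNum G := by
  have h0 : (0:ℕ) ∈ {n : ℕ | ∃ s : Set V, IsIndepSet G s ∧ s.ncard = n} :=
    ⟨∅, by simp [IsIndepSet], by simp⟩
  exact Nat.sSup_mem ⟨0, h0⟩ (indep_bdd G)

lemma gadget_adj_inl {V : Type*} (G : SimpleGraph V) (u v x y : V) :
    (gadget G u v).Adj (Sum.inl x) (Sum.inl y) ↔ G.Adj x y := by
  simp only [gadget, SimpleGraph.fromEdgeSet_adj, Set.mem_union, Set.mem_image,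
    Set.mem_insert_iff, Set.mem_singleton_iff]
  constructor
  · rintro ⟨(⟨e, he, heq⟩ | h), hne⟩
    · have : e = s(x, y) :=
        Sym2.map.injective Sum.inl_injective (by simpa using heq)
      rwa [this, SimpleGraph.mem_edgeSet] at he
    · simp_all [Sym2.eq_iff]
  · intro h
    exact ⟨Or.inl ⟨s(x, y), h, rfl⟩, by simp [h.ne]⟩

lemma gadget_not_adj_two {V : Type*} (G : SimpleGraph V) (u v x : V) :
    ¬ (gadget G u v).Adj (Sum.inr 2) (Sum.inl x) := by
  simp only [gadget, SimpleGraph.fromEdgeSet_adj, Set.mem_union, Set.mem_image,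
    Set.mem_insert_iff, Set.mem_singleton_iff]
  rintro ⟨(⟨e, he, heq⟩ | h), hne⟩
  · induction e using Sym2.ind with
    | _ p q => simp [Sym2.eq_iff] at heq
  · simp_all [Sym2.eq_iff]

lemma gadget_adj_inr {V : Type*} (G : SimpleGraph V) (u v : V) (i j : Fin 3)
    (hij : i ≠ j) : (gadget G u v).Adj (Sum.inr i) (Sum.inr j) := by
  refine ⟨?_, by simpa using hij⟩
  fin_cases i <;> fin_cases j <;> simp_all [Sym2.eq_iff]


theorem clar_stmt_0 {V : Type*} [Fintype V] (G : SimpleGraph V) (u v : V)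
    (huv : G.Adj u v) :
    indepNum (gadget G u v) = indepNum G + 1 := by
  apply le_antisymm
  · -- upper bound
    obtain ⟨T, hT, hTcard⟩ := exists_indep (gadget G u v)
    rw [← hTcard]
    set S : Set V := Sum.inl ⁻¹' T with hS
    have hSind : IsIndepSet G S := by
      intro x hx y hy hxy hadj
      exact hT hx hy (by simpa using hxy) ((gadget_adj_inl G u v x y).2 hadj)
    have hsub : T ⊆ (Sum.inl '' S) ∪ (T ∩ Set.range Sum.inr) := by
      rintro (x | i) hx
      · exact Or.inl ⟨x, hx, rfl⟩
      · exact Or.inr ⟨hx, ⟨i, rfl⟩⟩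
    have hsm : (T ∩ Set.range Sum.inr).Subsingleton := by
      rintro x ⟨hxT, i, rfl⟩ y ⟨hyT, j, rfl⟩
      by_contra hne
      have hij : i ≠ j := fun h => hne (by rw [h])
      exact hT hxT hyT (by simpa using hij) (gadget_adj_inr G u v i j hij)
    calc T.ncard ≤ ((Sum.inl '' S) ∪ (T ∩ Set.range Sum.inr)).ncard :=
          Set.ncard_le_ncard hsub (Set.toFinite _)
      _ ≤ (Sum.inl '' S).ncard + (T ∩ Set.range Sum.inr).ncard :=
          Set.ncard_union_le _ _
      _ ≤ S.ncard + 1 := by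
          gcongr
          · exact le_of_eq (Set.ncard_image_of_injective _ Sum.inl_injective)
          · exact (Set.ncard_le_one (Set.toFinite _)).2 fun a ha b hb => hsm ha hb
      _ ≤ indepNum G + 1 := by
          gcongr
          exact le_indepNum G hSind
  · -- lower bound
    obtain ⟨S, hS, hScard⟩ := exists_indep G
    have hTind : IsIndepSet (gadget G u v) (insert (Sum.inr 2) (Sum.inl '' S)) := by
      rintro x hx y hy hxy hadj
      rcases hx with rfl | ⟨a, ha, rfl⟩
      · rcases hy with rfl | ⟨b, hb, rfl⟩
        · exact hxy rfl
        · exact gadget_not_adj_two G u v b hadj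
      · rcases hy with rfl | ⟨b, hb, rfl⟩
        · exact gadget_not_adj_two G u v a hadj.symm
        · exact hS ha hb (fun h => hxy (by rw [h]))
            ((gadget_adj_inl G u v a b).1 hadj)
    have hcard : (insert (Sum.inr 2 : V ⊕ Fin 3) (Sum.inl '' S)).ncard
        = indepNum G + 1 := by
      rw [Set.ncard_insert_of_notMem (by simp) (Set.toFinite _),
        Set.ncard_image_of_injective _ Sum.inl_injective, hScard]
    rw [← hcard]
    exact le_indepNum _ hTind
end

section
/- Let G = (V,E) be a simple graph, let uv ∈ E be an edge of G, and let G_F be the gadget extension of G at uv. Then α(G_F) ≥ α(G) + 1. -/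
lemma gadget_adj_inl_inl {V : Type*} {G : SimpleGraph V} {u v x y : V}
    (h : (gadget G u v).Adj (Sum.inl x) (Sum.inl y)) : G.Adj x y := by
  simp only [gadget, SimpleGraph.fromEdgeSet_adj, Set.mem_union, Set.mem_image,
    Set.mem_insert_iff, Set.mem_singleton_iff] at h
  obtain ⟨h1, hne⟩ := h
  rcases h1 with ⟨e, he, heq⟩ | h1
  · have : Sym2.map (Sum.inl : V → V ⊕ Fin 3) s(x, y) = Sym2.map Sum.inl e := by
      rw [heq]; rfl
    have := (Sym2.map.injective Sum.inl_injective) this.symm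
    rwa [this] at he
  · simp [Sym2.eq, Sym2.rel_iff'] at h1

lemma gadget_not_adj_inl_c {V : Type*} {G : SimpleGraph V} {u v x : V} :
    ¬ (gadget G u v).Adj (Sum.inl x) (Sum.inr 2) := by
  simp only [gadget, SimpleGraph.fromEdgeSet_adj, Set.mem_union, Set.mem_image,
    Set.mem_insert_iff, Set.mem_singleton_iff]
  rintro ⟨h1, _⟩
  rcases h1 with ⟨e, _, heq⟩ | h1
  · induction e using Sym2.inductionOn with
    | hf a b => simp [Sym2.eq, Sym2.rel_iff'] at heq
  · simp [Sym2.eq, Sym2.rel_iff'] at h1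

theorem clar_stmt_1 {V : Type*} [Fintype V] (G : SimpleGraph V) (u v : V)
    (huv : G.Adj u v) :
    indepNum (gadget G u v) ≥ indepNum G + 1 := by
  classical
  have hbdd : ∀ (W : Type _) [Fintype W] (H : SimpleGraph W),
      BddAbove {n : ℕ | ∃ s : Set W, IsIndepSet H s ∧ s.ncard = n} := by
    intro W _ H
    refine ⟨Fintype.card W, ?_⟩
    rintro n ⟨s, _, rfl⟩
    simpa [Set.ncard_univ, Nat.card_eq_fintype_card] using Set.ncard_le_ncard (Set.subset_univ s) Set.finite_univ
  have hne : (0 : ℕ) ∈ {n : ℕ | ∃ s : Set V, IsIndepSet G s ∧ s.ncard = n} :=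
    ⟨∅, Set.pairwise_empty _, by simp⟩
  have hmem := Nat.sSup_mem ⟨0, hne⟩ (hbdd V G)
  obtain ⟨s, hs, hcard⟩ := hmem
  set t : Set (V ⊕ Fin 3) := insert (Sum.inr 2) (Sum.inl '' s) with ht
  have htind : IsIndepSet (gadget G u v) t := by
    rintro x hx y hy hxy
    rcases hx with rfl | ⟨x', hx', rfl⟩ <;> rcases hy with rfl | ⟨y', hy', rfl⟩
    · exact absurd rfl hxy
    · exact fun h => gadget_not_adj_inl_c (h.symm)
    · exact gadget_not_adj_inl_c
    · intro h
      exact hs hx' hy' (fun he => hxy (by rw [he])) (gadget_adj_inl_inl h)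
  have htcard : t.ncard = indepNum G + 1 := by
    rw [ht, Set.ncard_insert_of_notMem (by simp) ((s.toFinite.image _))]
    rw [Set.ncard_image_of_injective _ Sum.inl_injective, hcard]; rfl
  have : indepNum G + 1 ∈ {n : ℕ | ∃ s : Set (V ⊕ Fin 3),
      IsIndepSet (gadget G u v) s ∧ s.ncard = n} := ⟨t, htind, htcard⟩
  exact le_csSup (hbdd _ (gadget G u v)) this
end

section
/- Let G = (V,E) be a simple graph, let uv ∈ E be an edge of G, and let G_F be the gadget extension of G at uv. Then α(G_F) ≤ α(G) + 1. -/
theorem clar_stmt_2 {V : Type*} [Fintype V] (G : SimpleGraph V) (u v : V)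
    (huv : G.Adj u v) :
    indepNum (gadget G u v) ≤ indepNum G + 1 := by
  classical
  apply csSup_le'
  rintro n ⟨T, hT, rfl⟩
  set S := Sum.inl ⁻¹' T with hSdef
  set R := Sum.inr ⁻¹' T with hRdef
  have hdecomp : T = (Sum.inl '' S) ∪ (Sum.inr '' R) := by
    ext x; cases x with
    | inl a => simp [S, R]
    | inr b => simp [S, R]
  have hdisj : Disjoint (Sum.inl '' S) (Sum.inr '' R : Set (V ⊕ Fin 3)) := by
    rw [Set.disjoint_iff_forall_ne]
    rintro _ ⟨a, -, rfl⟩ _ ⟨b, -, rfl⟩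
    simp
  have hcard : T.ncard = S.ncard + R.ncard := by
    rw [hdecomp, Set.ncard_union_eq hdisj (Set.toFinite _) (Set.toFinite _),
      Set.ncard_image_of_injective _ Sum.inl_injective,
      Set.ncard_image_of_injective _ Sum.inr_injective]
  -- the three gadget vertices form a triangle
  have hadj : ∀ i j : Fin 3, i ≠ j → (gadget G u v).Adj (Sum.inr i) (Sum.inr j) := by
    intro i j hij
    rw [gadget, SimpleGraph.fromEdgeSet_adj]
    refine ⟨Or.inr ?_, by simp [hij]⟩
    fin_cases i <;> fin_cases j <;> first
      | exact (hij rfl).elim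
      | simp [Sym2.eq_iff]
  have hR1 : R.ncard ≤ 1 := by
    by_contra h
    push_neg at h
    obtain ⟨i, j, hi, hj, hij⟩ := (Set.one_lt_ncard_iff (Set.toFinite R)).mp h
    exact hT hi hj (by simp [hij]) (hadj i j hij)
  have hSind : IsIndepSet G S := by
    intro x hx y hy hxy hadjxy
    refine hT hx hy (by simp [hxy]) ?_
    rw [gadget, SimpleGraph.fromEdgeSet_adj]
    exact ⟨Or.inl ⟨s(x, y), G.mem_edgeSet.mpr hadjxy, by simp⟩, by simp [hxy]⟩
  have hSle : S.ncard ≤ indepNum G := by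
    apply le_csSup
    · refine ⟨Fintype.card V, ?_⟩
      rintro m ⟨s, -, rfl⟩
      calc s.ncard ≤ (Set.univ : Set V).ncard :=
            Set.ncard_le_ncard (Set.subset_univ s) Set.finite_univ
        _ = Fintype.card V := by simp [Set.ncard_univ]
    · exact ⟨S, hSind, rfl⟩
  omega
end
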